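/- Let p > 3 be a prime and let G = Φ₃₃(1⁶) be the group of order p⁶ with presentation on generators α, α₁, α₂, β₁, β₂, γ and relations [α₁,α] = β₁, [α₂,α] = β₂, [α₁,β₁] = γ, [β₂,α] = γ, αᵖ = α₁ᵖ = 1, α₂ᵖ·γ^C(p,3) = 1, β₁ᵖ = β₂ᵖ = γᵖ = 1, with every commutator of a pair of generators not listed among these relations declared trivial. Then the Bogomolov multiplier B₀(G) is trivial. -/

import Mathlib

/-!
Φ₃₃(1⁶): relations [α₁,α]=β₁, [α₂,α]=β₂, [α₁,β₁]=γ, [β₂,α]=γ, αᵖ=α₁ᵖ=1,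
α₂ᵖγ^C(p,3)=1, β₁ᵖ=β₂ᵖ=γᵖ=1.
-/

namespace Stmt9

/-- The additive group `ℚ/ℤ`. -/
abbrev QZ : Type := ℚ ⧸ AddSubgroup.zmultiples (1 : ℚ)

/-- An inhomogeneous 2-cocycle on `G` with values in `ℚ/ℤ` (trivial `G`-action). -/
def IsTwoCocycle {G : Type} [Group G] (f : G → G → QZ) : Prop :=
  ∀ g h j : G, f h j - f (g * h) j + f g (h * j) - f g h = 0

/-- An inhomogeneous 2-coboundary on `G` with values in `ℚ/ℤ` (trivial `G`-action). -/
def IsTwoCoboundary {G : Type} [Group G] (f : G → G → QZ) : Prop :=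
  ∃ c : G → QZ, ∀ g h : G, f g h = c h - c (g * h) + c g

/-- A subgroup is bicyclic if it is abelian and generated by at most two elements
(equivalently, cyclic or a direct product of two cyclic groups). -/
def IsBicyclic {G : Type} [Group G] (A : Subgroup G) : Prop :=
  (∀ x y : A, x * y = y * x) ∧ ∃ a b : G, A = Subgroup.closure {a, b}

/-- The Bogomolov multiplier `B₀(G) ⊆ H²(G, ℚ/ℤ)` is trivial, phrased at the level of
2-cocycles: every 2-cocycle whose restriction to each bicyclic subgroup is a coboundary
(i.e. whose class restricts to zero on each bicyclic subgroup) is itself a coboundary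
(i.e. its class is zero). -/
def BogomolovMultiplierIsTrivial (G : Type) [Group G] : Prop :=
  ∀ f : G → G → QZ, IsTwoCocycle f →
    (∀ A : Subgroup G, IsBicyclic A → IsTwoCoboundary (fun a b : ↥A => f ↑a ↑b)) →
    IsTwoCoboundary f

/-- The Bogomolov multiplier `B₀(G) ⊆ H²(G, ℚ/ℤ)` is nontrivial, phrased at the level of
2-cocycles. -/
def BogomolovMultiplierIsNontrivial (G : Type) [Group G] : Prop :=
  ∃ f : G → G → QZ, IsTwoCocycle f ∧
    (∀ A : Subgroup G, IsBicyclic A → IsTwoCoboundary (fun a b : ↥A => f ↑a ↑b)) ∧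
    ¬ IsTwoCoboundary f

/-- The generators. -/
inductive Gen | a | a1 | a2 | b1 | b2 | g

open FreeGroup

/-- The commutator `[x,y] = x⁻¹y⁻¹xy`. -/
def c (x y : FreeGroup Gen) : FreeGroup Gen := x⁻¹ * y⁻¹ * x * y

/-- The defining relators. -/
def rels (p : ℕ) : Set (FreeGroup Gen) :=
  { c (of .a1) (of .a) * (of Gen.b1)⁻¹,
    c (of .a2) (of .a) * (of Gen.b2)⁻¹,
    c (of .a1) (of .b1) * (of Gen.g)⁻¹,
    c (of .b2) (of .a) * (of Gen.g)⁻¹,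
    c (of .a) (of .b1),
    c (of .a) (of .g),
    c (of .a1) (of .a2),
    c (of .a1) (of .b2),
    c (of .a1) (of .g),
    c (of .a2) (of .b1),
    c (of .a2) (of .b2),
    c (of .a2) (of .g),
    c (of .b1) (of .b2),
    c (of .b1) (of .g),
    c (of .b2) (of .g),
    (of Gen.a) ^ p,
    (of Gen.a1) ^ p,
    (of Gen.a2) ^ p * (of Gen.g) ^ (p.choose 3),
    (of Gen.b1) ^ p,
    (of Gen.b2) ^ p,
    (of Gen.g) ^ p }

/-!
A 2-cocycle `f` whose class vanishes on bicyclic subgroups is symmetric on commuting pairs, so in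
the central extension `1 → ℚ/ℤ → E → G → 1` it defines, lifts of commuting elements commute.
As `ℚ/ℤ` is divisible, `α, α₁` lift to `A, A₁` with `Aᵖ = A₁ᵖ = 1`; with `B₁ = [A₁, A]` and
`Γ = [A₁, B₁]`, `α₂` lifts to `A₂` with `A₂ᵖ Γ^C(p,3) = 1`; put `B₂ = [A₂, A]`. All commutation
relations lift. So does `[B₂, A] = Γ`: in any group where the relevant pairs commute,
`(b₂b₁)(a₁a) = (a₁a)(b₂b₁) [b₂, a] [a₁, b₁]⁻¹`, hence `β₂β₁` commutes with `α₁α` in `G`, and then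
`B₂B₁` with `A₁A` in `E`. The remaining power relations follow from
`X⁻ⁿ Y Xⁿ = Y Bⁿ D^C(n,2)`, valid when `X⁻¹YX = YB`, `X⁻¹BX = BD` and `D` commutes with `X` and
`B`, together with `p ∣ C(p,2)`.
Hence `E → G` splits, and a splitting exhibits `f` as a coboundary.
-/

section Extension

variable {G : Type} [Group G] {f : G → G → QZ}

theorem IsTwoCocycle.apply_one_left (hf : IsTwoCocycle f) (y : G) : f 1 y = f 1 1 := by
  have h := hf 1 1 y
  rw [one_mul, one_mul, sub_self, zero_add, sub_eq_zero] at h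
  exact h

theorem isBicyclic_closure_pair {x y : G} (h : Commute x y) :
    IsBicyclic (Subgroup.closure {x, y}) := by
  refine ⟨fun u v => (Subgroup.isMulCommutative_closure ?_).is_comm.comm u v, x, y, rfl⟩
  simp only [Set.mem_insert_iff, Set.mem_singleton_iff]
  rintro _ (rfl | rfl) _ (rfl | rfl) <;> first | rfl | exact h.eq | exact h.eq.symm

theorem apply_comm_of_commute
    (hf : ∀ A : Subgroup G, IsBicyclic A → IsTwoCoboundary (fun a b : ↥A => f ↑a ↑b))
    {x y : G} (h : Commute x y) : f x y = f y x := by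
  obtain ⟨c, hc⟩ := hf _ (isBicyclic_closure_pair h)
  have hx : x ∈ Subgroup.closure {x, y} := Subgroup.subset_closure (by simp)
  have hy : y ∈ Subgroup.closure {x, y} := Subgroup.subset_closure (by simp)
  have hxy : (⟨x, hx⟩ * ⟨y, hy⟩ : Subgroup.closure {x, y}) = ⟨y, hy⟩ * ⟨x, hx⟩ :=
    Subtype.ext h.eq
  have e1 := hc ⟨x, hx⟩ ⟨y, hy⟩
  have e2 := hc ⟨y, hy⟩ ⟨x, hx⟩
  simp only at e1 e2
  rw [e1, e2, hxy]
  abel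

variable (f) in
/-- Subtracting `f 1 1` in the product makes `⟨0, 1⟩` the identity and `w ↦ ⟨w, 1⟩` a
homomorphism. -/
@[ext] structure CocycleExtension (_ : IsTwoCocycle f) where
  fst : QZ
  snd : G

namespace CocycleExtension

variable {hf : IsTwoCocycle f}

instance : Mul (CocycleExtension f hf) :=
  ⟨fun u v => ⟨u.fst + v.fst + f u.snd v.snd - f 1 1, u.snd * v.snd⟩⟩

instance : One (CocycleExtension f hf) := ⟨⟨0, 1⟩⟩

instance : Inv (CocycleExtension f hf) :=
  ⟨fun u => ⟨-u.fst - f u.snd⁻¹ u.snd + f 1 1, u.snd⁻¹⟩⟩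

@[simp] theorem fst_mul (u v : CocycleExtension f hf) :
    (u * v).fst = u.fst + v.fst + f u.snd v.snd - f 1 1 := rfl

@[simp] theorem snd_mul (u v : CocycleExtension f hf) : (u * v).snd = u.snd * v.snd := rfl

@[simp] theorem fst_one : (1 : CocycleExtension f hf).fst = 0 := rfl

@[simp] theorem snd_one : (1 : CocycleExtension f hf).snd = 1 := rfl

@[simp] theorem fst_inv (u : CocycleExtension f hf) :
    u⁻¹.fst = -u.fst - f u.snd⁻¹ u.snd + f 1 1 := rfl

@[simp] theorem snd_inv (u : CocycleExtension f hf) : u⁻¹.snd = u.snd⁻¹ := rfl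

instance : Group (CocycleExtension f hf) := Group.ofLeftAxioms
  (fun u v w => CocycleExtension.ext (by
      simp only [fst_mul, snd_mul]
      linear_combination (norm := abel) -(hf u.snd v.snd w.snd)) (mul_assoc u.snd v.snd w.snd))
  (fun u => CocycleExtension.ext (by simp [hf.apply_one_left]) (one_mul u.snd))
  (fun u => CocycleExtension.ext (by simp only [fst_mul, fst_inv, snd_inv, fst_one]; abel)
    (inv_mul_cancel u.snd))

def proj : CocycleExtension f hf →* G where
  toFun := snd
  map_one' := rfl
  map_mul' _ _ := rfl

@[simp] theorem proj_apply (u : CocycleExtension f hf) : proj u = u.snd := rfl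

theorem proj_surjective : Function.Surjective (proj : CocycleExtension f hf →* G) :=
  fun x => ⟨⟨0, x⟩, rfl⟩

theorem commute_of_commute_proj (hsymm : ∀ x y : G, Commute x y → f x y = f y x)
    {u v : CocycleExtension f hf} (h : Commute (proj u) (proj v)) : Commute u v :=
  CocycleExtension.ext (by rw [fst_mul, fst_mul, hsymm u.snd v.snd h]; abel) h.eq

theorem mk_one_pow (w : QZ) (n : ℕ) :
    (⟨w, 1⟩ : CocycleExtension f hf) ^ n = ⟨n • w, 1⟩ := by
  induction n with
  | zero => simp [CocycleExtension.ext_iff]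
  | succ n ih => simp [pow_succ, ih, succ_nsmul, CocycleExtension.ext_iff]

theorem exists_pow_eq_of_proj_eq_one {n : ℕ} (hn : n ≠ 0) {u : CocycleExtension f hf}
    (hu : proj u = 1) : ∃ z, proj z = 1 ∧ z ^ n = u := by
  obtain ⟨q, hq⟩ := QuotientAddGroup.mk_surjective u.fst
  refine ⟨⟨((q / n : ℚ) : QZ), 1⟩, rfl, ?_⟩
  rw [mk_one_pow]
  refine CocycleExtension.ext ?_ hu.symm
  rw [← hq, ← QuotientAddGroup.mk_nsmul, nsmul_eq_mul, mul_div_cancel₀ _ (by exact_mod_cast hn)]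

theorem isTwoCoboundary_of_section (s : G →* CocycleExtension f hf) (hs : ∀ x, proj (s x) = x) :
    IsTwoCoboundary f := by
  refine ⟨fun x => f 1 1 - (s x).fst, fun x y => ?_⟩
  have h := congrArg fst (s.map_mul x y)
  rw [fst_mul, ← proj_apply, ← proj_apply (s y), hs, hs] at h
  simp only [h]
  abel

end CocycleExtension

end Extension

section Commutators

variable {H : Type*} [Group H]

theorem inv_mul_inv_mul_mul_eq_one_iff {x y : H} : x⁻¹ * y⁻¹ * x * y = 1 ↔ Commute x y := by
  rw [show x⁻¹ * y⁻¹ * x * y = (y * x)⁻¹ * (x * y) by group, inv_mul_eq_one, eq_comm]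
  rfl

theorem conj_eq_mul_of_commutator_eq {x y z : H} (h : x⁻¹ * y⁻¹ * x * y = z) :
    y⁻¹ * x * y = x * z := by
  rw [← h]; group

theorem conj_pow_eq_mul_pow_mul_pow_choose_two {X Y B D : H} (hY : X⁻¹ * Y * X = Y * B)
    (hB : X⁻¹ * B * X = B * D) (hBD : Commute B D) (hDX : Commute D X) (n : ℕ) :
    (X ^ n)⁻¹ * Y * X ^ n = Y * B ^ n * D ^ n.choose 2 := by
  have conj_pow : ∀ (Z : H) (k : ℕ), X⁻¹ * Z ^ k * X = (X⁻¹ * Z * X) ^ k := fun Z k => by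
    simpa using (conj_pow (a := X⁻¹) (b := Z) (i := k)).symm
  have hD : X⁻¹ * D * X = D := by rw [mul_assoc, hDX.eq, inv_mul_cancel_left]
  induction n with
  | zero => simp
  | succ n ih =>
    calc (X ^ (n + 1))⁻¹ * Y * X ^ (n + 1)
        = X⁻¹ * ((X ^ n)⁻¹ * Y * X ^ n) * X := by group
      _ = (X⁻¹ * Y * X) * (X⁻¹ * B ^ n * X) * (X⁻¹ * D ^ n.choose 2 * X) := by
          rw [ih]; group
      _ = Y * B * (B ^ n * D ^ n) * D ^ n.choose 2 := by
          rw [conj_pow, conj_pow, hY, hB, hD, hBD.mul_pow]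
      _ = Y * B ^ (n + 1) * D ^ (n + 1).choose 2 := by
          rw [Nat.choose_succ_succ, Nat.choose_one_right, pow_add]; group

theorem pow_mul_pow_choose_two_eq_one {X Y B D : H} {n : ℕ} (hY : X⁻¹ * Y * X = Y * B)
    (hB : X⁻¹ * B * X = B * D) (hBD : Commute B D) (hDX : Commute D X) (hX : X ^ n = 1) :
    B ^ n * D ^ n.choose 2 = 1 := by
  have h := conj_pow_eq_mul_pow_mul_pow_choose_two hY hB hBD hDX n
  rwa [hX, inv_one, one_mul, mul_one, mul_assoc, left_eq_mul] at h

theorem pow_eq_one_of_conj_eq_mul {X Y B : H} {n : ℕ} (hY : X⁻¹ * Y * X = Y * B)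
    (hBX : Commute B X) (hX : X ^ n = 1) : B ^ n = 1 := by
  simpa using pow_mul_pow_choose_two_eq_one hY (by rw [mul_one, mul_assoc, hBX.eq,
    inv_mul_cancel_left]) (Commute.one_right B) (Commute.one_left X) hX

theorem mul_mul_eq_mul_mul_mul_mul_inv {a a1 b1 b2 γ δ : H}
    (hγ : a1⁻¹ * b1⁻¹ * a1 * b1 = γ) (hδ : b2⁻¹ * a⁻¹ * b2 * a = δ) (hb2a1 : Commute b2 a1)
    (hγa : Commute γ a) (hb1a : Commute b1 a) (hδb1 : Commute δ b1) :
    b2 * b1 * (a1 * a) = a1 * a * (b2 * b1) * (δ * γ⁻¹) := by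
  have hb1a1 : b1 * a1 = a1 * b1 * γ⁻¹ := by rw [← hγ]; group
  have hb2a : b2 * a = a * b2 * δ := by rw [← hδ]; group
  calc b2 * b1 * (a1 * a) = b2 * (b1 * a1) * a := by group
    _ = b2 * a1 * b1 * (γ⁻¹ * a) := by rw [hb1a1]; group
    _ = a1 * b2 * (b1 * a) * γ⁻¹ := by rw [hb2a1.eq, hγa.inv_left.eq]; group
    _ = a1 * (b2 * a) * b1 * γ⁻¹ := by rw [hb1a.eq]; group
    _ = a1 * a * b2 * (δ * b1) * γ⁻¹ := by rw [hb2a]; group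
    _ = a1 * a * (b2 * b1) * (δ * γ⁻¹) := by rw [hδb1.eq]; group

theorem commute_mul_mul_iff {a a1 b1 b2 γ δ : H}
    (hγ : a1⁻¹ * b1⁻¹ * a1 * b1 = γ) (hδ : b2⁻¹ * a⁻¹ * b2 * a = δ) (hb2a1 : Commute b2 a1)
    (hγa : Commute γ a) (hb1a : Commute b1 a) (hδb1 : Commute δ b1) :
    Commute (b2 * b1) (a1 * a) ↔ δ = γ := by
  rw [Commute, SemiconjBy, mul_mul_eq_mul_mul_mul_mul_inv hγ hδ hb2a1 hγa hb1a hδb1,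
    mul_eq_left, mul_inv_eq_one]

end Commutators

structure SatisfiesRels {H : Type*} [Group H] (p : ℕ) (a a1 a2 b1 b2 g : H) : Prop where
  commutator_a1_a : a1⁻¹ * a⁻¹ * a1 * a = b1
  commutator_a2_a : a2⁻¹ * a⁻¹ * a2 * a = b2
  commutator_a1_b1 : a1⁻¹ * b1⁻¹ * a1 * b1 = g
  commutator_b2_a : b2⁻¹ * a⁻¹ * b2 * a = g
  commute_a_b1 : Commute a b1
  commute_a_g : Commute a g
  commute_a1_a2 : Commute a1 a2
  commute_a1_b2 : Commute a1 b2
  commute_a1_g : Commute a1 g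
  commute_a2_b1 : Commute a2 b1
  commute_a2_b2 : Commute a2 b2
  commute_a2_g : Commute a2 g
  commute_b1_b2 : Commute b1 b2
  commute_b1_g : Commute b1 g
  commute_b2_g : Commute b2 g
  pow_a : a ^ p = 1
  pow_a1 : a1 ^ p = 1
  pow_a2 : a2 ^ p * g ^ p.choose 3 = 1
  pow_b1 : b1 ^ p = 1
  pow_b2 : b2 ^ p = 1
  pow_g : g ^ p = 1

theorem lift_rels_eq_one_iff {H : Type*} [Group H] (p : ℕ) (v : Gen → H) :
    (∀ r ∈ rels p, FreeGroup.lift v r = 1) ↔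
      SatisfiesRels p (v .a) (v .a1) (v .a2) (v .b1) (v .b2) (v .g) := by
  simp only [rels, Set.mem_insert_iff, Set.mem_singleton_iff, forall_eq_or_imp, forall_eq, c,
    _root_.map_mul, _root_.map_inv, _root_.map_pow, FreeGroup.lift_apply_of, mul_inv_eq_one,
    inv_mul_inv_mul_mul_eq_one_iff]
  exact ⟨fun ⟨h1, h2, h3, h4, h5, h6, h7, h8, h9, h10, h11, h12, h13, h14, h15, h16, h17, h18,
      h19, h20, h21⟩ => ⟨h1, h2, h3, h4, h5, h6, h7, h8, h9, h10, h11, h12, h13, h14, h15, h16,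
      h17, h18, h19, h20, h21⟩,
    fun ⟨h1, h2, h3, h4, h5, h6, h7, h8, h9, h10, h11, h12, h13, h14, h15, h16, h17, h18, h19,
      h20, h21⟩ => ⟨h1, h2, h3, h4, h5, h6, h7, h8, h9, h10, h11, h12, h13, h14, h15, h16, h17,
      h18, h19, h20, h21⟩⟩

theorem satisfiesRels_presentedGroup (p : ℕ) :
    SatisfiesRels p (PresentedGroup.of (rels := rels p) Gen.a) (PresentedGroup.of Gen.a1)
      (PresentedGroup.of Gen.a2) (PresentedGroup.of Gen.b1) (PresentedGroup.of Gen.b2)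
      (PresentedGroup.of Gen.g) :=
  (lift_rels_eq_one_iff p PresentedGroup.of).1 fun _ hr =>
    (FreeGroup.lift_unique (PresentedGroup.mk _) fun _ => rfl).symm.trans
      (PresentedGroup.one_of_mem hr)

section Lifting

variable {E G : Type*} [Group E] [Group G] (π : E →* G) {p : ℕ}

theorem exists_lift_pow_mul_eq_one (hcomm : ∀ {u v}, Commute (π u) (π v) → Commute u v)
    (hroot : ∀ u, π u = 1 → ∃ z, π z = 1 ∧ z ^ p = u) (X Y : E)
    (h : π (X ^ p * Y) = 1) : ∃ X', π X' = π X ∧ X' ^ p * Y = 1 := by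
  obtain ⟨z, hz1, hzp⟩ := hroot _ h
  have hz : ∀ u, Commute z u := fun u => hcomm (by rw [hz1]; exact Commute.one_left _)
  refine ⟨X * z⁻¹, by rw [_root_.map_mul, _root_.map_inv, hz1, inv_one, mul_one], ?_⟩
  rw [(hz X).symm.inv_right.mul_pow, inv_pow, mul_assoc, ((hz Y).pow_left p).inv_left.eq,
    ← mul_assoc, ← hzp, mul_inv_cancel]

theorem SatisfiesRels.of_lifts (hcomm : ∀ {u v}, Commute (π u) (π v) → Commute u v)
    (hp : p.Prime) (hp2 : 2 < p) {A A1 A2 B1 B2 Γ : E}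
    (hG : SatisfiesRels p (π A) (π A1) (π A2) (π B1) (π B2) (π Γ))
    (hB1 : A1⁻¹ * A⁻¹ * A1 * A = B1) (hB2 : A2⁻¹ * A⁻¹ * A2 * A = B2)
    (hΓ : A1⁻¹ * B1⁻¹ * A1 * B1 = Γ) (hA : A ^ p = 1) (hA1 : A1 ^ p = 1)
    (hA2 : A2 ^ p * Γ ^ p.choose 3 = 1) : SatisfiesRels p A A1 A2 B1 B2 Γ := by
  have hΔ : B2⁻¹ * A⁻¹ * B2 * A = Γ := by
    have hπΔ : π (B2⁻¹ * A⁻¹ * B2 * A) = π Γ := by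
      simp only [_root_.map_mul, _root_.map_inv, hG.commutator_b2_a]
    refine (commute_mul_mul_iff hΓ rfl (hcomm hG.commute_a1_b2).symm
      (hcomm hG.commute_a_g).symm (hcomm hG.commute_a_b1).symm
      (hcomm (hπΔ ▸ hG.commute_b1_g.symm))).1 (hcomm ?_)
    simp only [_root_.map_mul]
    exact (commute_mul_mul_iff hG.commutator_a1_b1 hG.commutator_b2_a hG.commute_a1_b2.symm
      hG.commute_a_g.symm hG.commute_a_b1.symm hG.commute_b1_g.symm).2 rfl
  have hB1p : B1 ^ p = 1 := pow_eq_one_of_conj_eq_mul (conj_eq_mul_of_commutator_eq hB1)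
    (hcomm hG.commute_a_b1).symm hA
  have hΓp : Γ ^ p = 1 := pow_eq_one_of_conj_eq_mul (conj_eq_mul_of_commutator_eq hΓ)
    (hcomm hG.commute_b1_g).symm hB1p
  have hB2p : B2 ^ p * Γ ^ p.choose 2 = 1 := pow_mul_pow_choose_two_eq_one
    (conj_eq_mul_of_commutator_eq hB2) (conj_eq_mul_of_commutator_eq hΔ)
    (hcomm hG.commute_b2_g) (hcomm hG.commute_a_g).symm hA
  obtain ⟨k, hk⟩ := hp.dvd_choose_self two_ne_zero hp2
  rw [hk, pow_mul, hΓp, one_pow, mul_one] at hB2p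
  exact ⟨hB1, hB2, hΓ, hΔ, hcomm hG.commute_a_b1, hcomm hG.commute_a_g,
    hcomm hG.commute_a1_a2, hcomm hG.commute_a1_b2, hcomm hG.commute_a1_g,
    hcomm hG.commute_a2_b1, hcomm hG.commute_a2_b2, hcomm hG.commute_a2_g,
    hcomm hG.commute_b1_b2, hcomm hG.commute_b1_g, hcomm hG.commute_b2_g,
    hA, hA1, hA2, hB1p, hB2p, hΓp⟩

theorem exists_lifts_satisfiesRels (hπ : Function.Surjective π)
    (hcomm : ∀ {u v}, Commute (π u) (π v) → Commute u v)
    (hroot : ∀ u, π u = 1 → ∃ z, π z = 1 ∧ z ^ p = u) (hp : p.Prime) (hp2 : 2 < p)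
    {a a1 a2 b1 b2 g : G} (h : SatisfiesRels p a a1 a2 b1 b2 g) :
    ∃ A A1 A2 B1 B2 Γ : E, π A = a ∧ π A1 = a1 ∧ π A2 = a2 ∧ π B1 = b1 ∧ π B2 = b2 ∧ π Γ = g ∧
      SatisfiesRels p A A1 A2 B1 B2 Γ := by
  have lift_pow (x : G) (Y : E) (hx : x ^ p * π Y = 1) : ∃ X, π X = x ∧ X ^ p * Y = 1 := by
    obtain ⟨X, rfl⟩ := hπ x
    exact exists_lift_pow_mul_eq_one π hcomm hroot X Y (by rwa [_root_.map_mul, _root_.map_pow])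
  obtain ⟨A, hπA, hA⟩ : ∃ A, π A = a ∧ A ^ p = 1 := by
    simpa using lift_pow a 1 (by simpa using h.pow_a)
  obtain ⟨A1, hπA1, hA1⟩ : ∃ A1, π A1 = a1 ∧ A1 ^ p = 1 := by
    simpa using lift_pow a1 1 (by simpa using h.pow_a1)
  set B1 := A1⁻¹ * A⁻¹ * A1 * A
  set Γ := A1⁻¹ * B1⁻¹ * A1 * B1
  have hπB1 : π B1 = b1 := by
    simp only [B1, _root_.map_mul, _root_.map_inv, hπA, hπA1, h.commutator_a1_a]
  have hπΓ : π Γ = g := by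
    simp only [Γ, _root_.map_mul, _root_.map_inv, hπB1, hπA1, h.commutator_a1_b1]
  obtain ⟨A2, hπA2, hA2⟩ := lift_pow a2 (Γ ^ p.choose 3) (by rw [_root_.map_pow, hπΓ, h.pow_a2])
  set B2 := A2⁻¹ * A⁻¹ * A2 * A
  have hπB2 : π B2 = b2 := by
    simp only [B2, _root_.map_mul, _root_.map_inv, hπA, hπA2, h.commutator_a2_a]
  refine ⟨A, A1, A2, B1, B2, Γ, hπA, hπA1, hπA2, hπB1, hπB2, hπΓ,
    SatisfiesRels.of_lifts π hcomm hp hp2 ?_ rfl rfl rfl hA hA1 hA2⟩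
  rwa [hπA, hπA1, hπA2, hπB1, hπB2, hπΓ]

end Lifting

theorem bogomolov_trivial_Phi33_general (p : ℕ) (hp : p.Prime) (h3 : 3 < p) :
    BogomolovMultiplierIsTrivial (PresentedGroup (rels p)) := by
  intro f hf hbic
  obtain ⟨A, A1, A2, B1, B2, Γ, hA, hA1, hA2, hB1, hB2, hΓ, hE⟩ :=
    exists_lifts_satisfiesRels CocycleExtension.proj CocycleExtension.proj_surjective
      (CocycleExtension.commute_of_commute_proj fun _ _ => apply_comm_of_commute hbic)
      (fun _ => CocycleExtension.exists_pow_eq_of_proj_eq_one hp.ne_zero) hp (by omega)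
      (satisfiesRels_presentedGroup p)
  let v : Gen → CocycleExtension f hf
    | .a => A | .a1 => A1 | .a2 => A2 | .b1 => B1 | .b2 => B2 | .g => Γ
  have hv := (lift_rels_eq_one_iff p v).2 hE
  have hs : CocycleExtension.proj.comp (PresentedGroup.toGroup hv) = MonoidHom.id _ :=
    PresentedGroup.ext fun i => by
      rw [MonoidHom.comp_apply, PresentedGroup.toGroup.of]
      cases i <;> assumption
  exact CocycleExtension.isTwoCoboundary_of_section _ (DFunLike.congr_fun hs)

theorem bogomolov_trivial_Phi33 (p : ℕ) (hp : p.Prime) (h3 : 3 < p)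
    (hcard : Nat.card (PresentedGroup (rels p)) = p ^ 6) :
    BogomolovMultiplierIsTrivial (PresentedGroup (rels p)) :=
  bogomolov_trivial_Phi33_general p hp h3

end Stmt9
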